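/- The nonlinear symplectic lift g(x,y) = (P y + η, −P x + ∇V(P y)) from R^{2k} to R^{2n}, with P ∈ R^{n×k} satisfying P^T P = I_k, has Jacobian Dg = [[0, P], [−P, H_V P]] (H_V the symmetric Hessian of V at P y) satisfying (Dg)^T J_{2n} Dg = J_{2k} at every point. -/
import Mathlib


open Matrix

def PoissonJ (n : ℕ) : Matrix (Fin n ⊕ Fin n) (Fin n ⊕ Fin n) ℝ :=
  Matrix.fromBlocks 0 1 (-1) 0

/-- The Jacobian `Dg = [[0, P], [−P, H_V P]]` of the nonlinear symplectic lift
`g(x,y) = (P y + η, −P x + ∇V(P y))`, with `Pᵀ P = I` and `H_V` the symmetric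
Hessian of `V`, satisfies `(Dg)ᵀ J_{2n} Dg = J_{2k}`. -/
theorem nonlinear_lift_jacobian_symplectic (n k : ℕ)
    (P : Matrix (Fin n) (Fin k) ℝ) (hP : Pᵀ * P = 1)
    (HV : Matrix (Fin n) (Fin n) ℝ) (hHV : HVᵀ = HV) :
    (Matrix.fromBlocks 0 P (-P) (HV * P))ᵀ * PoissonJ n *
      Matrix.fromBlocks 0 P (-P) (HV * P) = PoissonJ k := by
  simp only [PoissonJ, Matrix.fromBlocks_transpose, Matrix.fromBlocks_multiply]
  simp only [Matrix.transpose_zero, Matrix.transpose_neg, Matrix.transpose_mul, hHV,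
    Matrix.mul_zero, Matrix.zero_mul, Matrix.mul_one, Matrix.one_mul, Matrix.mul_neg,
    Matrix.neg_mul, neg_zero, neg_neg, add_zero, zero_add, neg_add_cancel]
  rw [hP, Matrix.mul_assoc Pᵀ HV P, neg_add_cancel]
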